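/- arXiv:2506.11566 — 4 statements merged into one kernel-verified Lean document; each statement's English description precedes it below -/
import Mathlib

section
/- Under the well-posedness assumptions for the mixed problem (B surjective with inf-sup constant β, a bounded with norm ‖a‖ and kernel inf-sup constant α₀, non-degenerate on K), the solution (u,p) of the mixed problem with data (f,g) satisfies ‖u‖_V ≤ (1/α₀)‖f‖_{K'} + (1/β)(1 + ‖a‖/α₀)‖g‖_{Q'}, where ‖f‖_{K'} = sup_{0≠v∈K}|f(v)|/‖v‖_V is the semi norm of f restricted to the kernel K of B. -/
open Set

/-- Dual (semi) norm of a functional `f : V → ℝ`, tested only on the subset `U`. -/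
noncomputable def dualSemiNorm {V : Type*} [NormedAddCommGroup V] (U : Set V) (f : V → ℝ) : ℝ :=
  sSup ((fun v => |f v| / ‖v‖) '' (U \ {0}))

/-- Refined stability estimate for the velocity component `u` of the mixed problem:
`‖u‖ ≤ (1/α₀)‖f‖_{K'} + (1/β)(1 + ‖a‖/α₀)‖g‖_{Q'}`. -/
theorem stmt1
    {V Q : Type*} [NormedAddCommGroup V] [InnerProductSpace ℝ V] [CompleteSpace V]
    [NormedAddCommGroup Q] [InnerProductSpace ℝ Q] [CompleteSpace Q]
    (a : V →L[ℝ] V →L[ℝ] ℝ) (b : V →L[ℝ] Q →L[ℝ] ℝ)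
    (K : Set V) (hK : K = {v : V | ∀ q : Q, b v q = 0})
    (α₀ : ℝ) (hα₀ : 0 < α₀)
    (hinfsup : ∀ w ∈ K, α₀ * ‖w‖ ≤ dualSemiNorm K (fun v => a w v))
    (hnondeg : ∀ w ∈ K, (∀ v ∈ K, a w v = 0) → w = 0)
    (β : ℝ) (hβ : 0 < β)
    (hBsurj : ∀ h : Q →L[ℝ] ℝ, ∃ v : V, b v = h ∧ ‖v‖ ≤ (1 / β) * ‖h‖)
    (f : V →L[ℝ] ℝ) (g : Q →L[ℝ] ℝ) (u : V) (p : Q)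
    (hsol1 : ∀ v : V, a u v + b v p = f v) (hsol2 : ∀ q : Q, b u q = g q) :
    ‖u‖ ≤ (1 / α₀) * dualSemiNorm K (fun v => f v)
      + (1 / β) * (1 + ‖a‖ / α₀) * ‖g‖ := by
  obtain ⟨ug, hbg, hugn⟩ := hBsurj g
  set u₀ : V := u - ug with hu₀def
  have hu₀K : u₀ ∈ K := by
    rw [hK]
    intro q
    simp [hu₀def, hbg, hsol2 q]
  -- dualSemiNorm K f is nonneg and the image set is bounded above
  have hfnonneg : 0 ≤ dualSemiNorm K (fun v => f v) := by
    apply Real.sSup_nonneg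
    rintro x ⟨v, -, rfl⟩
    positivity
  have hbdd : BddAbove ((fun v => |f v| / ‖v‖) '' (K \ {0})) := by
    refine ⟨‖f‖, ?_⟩
    rintro x ⟨v, ⟨-, hv0⟩, rfl⟩
    have hv : (0:ℝ) < ‖v‖ := norm_pos_iff.mpr (by simpa using hv0)
    rw [div_le_iff₀ hv]
    calc |f v| = ‖f v‖ := rfl
      _ ≤ ‖f‖ * ‖v‖ := f.le_opNorm v
  -- key bound on u₀
  have hkey : α₀ * ‖u₀‖ ≤ dualSemiNorm K (fun v => f v) + ‖a‖ * ‖ug‖ := by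
    refine (hinfsup u₀ hu₀K).trans ?_
    apply Real.sSup_le
    · rintro x ⟨v, ⟨hvK, hv0⟩, rfl⟩
      have hv : (0:ℝ) < ‖v‖ := norm_pos_iff.mpr (by simpa using hv0)
      have hbvp : b v p = 0 := by rw [hK] at hvK; exact hvK p
      have hav : a u₀ v = f v - a ug v := by
        have := hsol1 v
        simp only [hu₀def, map_sub, ContinuousLinearMap.sub_apply]
        linarith
      have h1 : |a u₀ v| ≤ |f v| + ‖a‖ * ‖ug‖ * ‖v‖ := by
        rw [hav]
        have := abs_sub (f v) (a ug v)
        have h2 : |a ug v| ≤ ‖a‖ * ‖ug‖ * ‖v‖ := a.le_opNorm₂ ug v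
        calc |f v - a ug v| ≤ |f v| + |a ug v| := abs_sub _ _
          _ ≤ |f v| + ‖a‖ * ‖ug‖ * ‖v‖ := by linarith
      have h3 : |f v| / ‖v‖ ≤ dualSemiNorm K (fun v => f v) :=
        le_csSup hbdd ⟨v, ⟨hvK, hv0⟩, rfl⟩
      have : |a u₀ v| / ‖v‖ ≤ |f v| / ‖v‖ + ‖a‖ * ‖ug‖ := by
        rw [div_add' _ _ _ hv.ne', div_le_div_iff₀ hv hv]
        nlinarith
      linarith
    · have : (0:ℝ) ≤ ‖a‖ * ‖ug‖ := by positivity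
      linarith
  have h1α : (0:ℝ) < 1 / α₀ := by positivity
  have hu₀ : ‖u₀‖ ≤ (1 / α₀) * (dualSemiNorm K (fun v => f v) + ‖a‖ * ‖ug‖) := by
    calc ‖u₀‖ = (1 / α₀) * (α₀ * ‖u₀‖) := by field_simp
      _ ≤ _ := mul_le_mul_of_nonneg_left hkey h1α.le
  have htri : ‖u‖ ≤ ‖u₀‖ + ‖ug‖ := by
    have : u = u₀ + ug := by rw [hu₀def]; abel
    calc ‖u‖ = ‖u₀ + ug‖ := by rw [← this]
      _ ≤ ‖u₀‖ + ‖ug‖ := norm_add_le _ _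
  have hanng : (0:ℝ) ≤ ‖a‖ := by positivity
  calc ‖u‖ ≤ ‖u₀‖ + ‖ug‖ := htri
    _ ≤ (1 / α₀) * (dualSemiNorm K (fun v => f v) + ‖a‖ * ‖ug‖) + ‖ug‖ := by linarith
    _ = (1 / α₀) * dualSemiNorm K (fun v => f v) + (1 + ‖a‖ / α₀) * ‖ug‖ := by
        field_simp; ring
    _ ≤ (1 / α₀) * dualSemiNorm K (fun v => f v) + (1 / β) * (1 + ‖a‖ / α₀) * ‖g‖ := by
        have hc : (0:ℝ) ≤ 1 + ‖a‖ / α₀ := by positivity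
        nlinarith [norm_nonneg g]
end

section
/- Under the well-posedness assumptions for the mixed problem, the pressure component p of the solution (u,p) with data (f,g) satisfies ‖p‖_Q ≤ (1/β) inf_{w⁰∈K} ( ‖f − a(w⁰,·)‖_{V'} + (‖a‖/α₀)‖f − a(w⁰,·)‖_{K'} ) + (‖a‖/β²)(1 + ‖a‖/α₀)‖g‖_{Q'}. -/
/-!
Fix `w₀ ∈ K` and lift `g` to some `u_g` with `b u_g = g` and `β ‖u_g‖ ≤ ‖g‖`. Then
`u - u_g - w₀ ∈ K`, and on `K` the first equation reads `a (u - u_g - w₀) = (f - a w₀) - a u_g`,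
so the inf-sup condition of `a` on `K` bounds `α₀ ‖u - w₀‖` by `‖f - a w₀‖_{K'}` plus a multiple
of `‖g‖`. Testing the first equation with a lift of the Riesz representative of `p` gives
`β ‖p‖ ≤ ‖f - a w₀‖_{V'} + ‖a‖ ‖u - w₀‖`. Combining the two and taking the infimum over `w₀`
gives the estimate.
-/

open Set

section DualSemiNorm

variable {V : Type*} [NormedAddCommGroup V]

lemma dualSemiNorm_nonneg (U : Set V) (f : V → ℝ) : 0 ≤ dualSemiNorm U f :=
  Real.sSup_nonneg <| by
    rintro x ⟨v, -, rfl⟩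
    positivity

lemma dualSemiNorm_le {U : Set V} {f : V → ℝ} {M : ℝ} (hM : 0 ≤ M)
    (h : ∀ v ∈ U, |f v| ≤ M * ‖v‖) : dualSemiNorm U f ≤ M := by
  refine Real.sSup_le ?_ hM
  rintro x ⟨v, ⟨hvU, hv0⟩, rfl⟩
  rw [div_le_iff₀ (norm_pos_iff.mpr hv0)]
  exact h v hvU

lemma abs_apply_le_dualSemiNorm [NormedSpace ℝ V] (U : Set V) (ℓ : V →L[ℝ] ℝ) {v : V}
    (hv : v ∈ U) : |ℓ v| ≤ dualSemiNorm U ℓ * ‖v‖ := by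
  rcases eq_or_ne v 0 with rfl | hv0
  · simp
  have hbdd : BddAbove ((fun x => |ℓ x| / ‖x‖) '' (U \ {0})) := by
    refine ⟨‖ℓ‖, ?_⟩
    rintro x ⟨w, ⟨-, hw0⟩, rfl⟩
    rw [div_le_iff₀ (norm_pos_iff.mpr hw0)]
    exact ℓ.le_opNorm w
  rw [← div_le_iff₀ (norm_pos_iff.mpr hv0)]
  exact le_csSup hbdd ⟨v, ⟨hv, hv0⟩, rfl⟩

end DualSemiNorm

section MixedProblem

variable {V Q : Type*} [NormedAddCommGroup V] [NormedSpace ℝ V]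
  [NormedAddCommGroup Q] [InnerProductSpace ℝ Q]
  {a : V →L[ℝ] V →L[ℝ] ℝ} {b : V →L[ℝ] Q →L[ℝ] ℝ} {K : Set V}

/-- Lifting the Riesz representative of `p` turns the lifting bound for `b` into the inf-sup
bound `β ‖p‖ ≤ sup_v b v p / ‖v‖`. -/
lemma mul_norm_le_of_forall_abs_le {β C : ℝ} (hβ : 0 < β)
    (hBsurj : ∀ h : Q →L[ℝ] ℝ, ∃ v : V, b v = h ∧ ‖v‖ ≤ (1 / β) * ‖h‖)
    {p : Q} (hC : 0 ≤ C) (hbp : ∀ v, |b v p| ≤ C * ‖v‖) : β * ‖p‖ ≤ C := by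
  obtain ⟨v, hv, hv_le⟩ := hBsurj (innerSL ℝ p)
  rw [innerSL_apply_norm, one_div_mul_eq_div, le_div_iff₀' hβ] at hv_le
  have hsq : ‖p‖ * ‖p‖ ≤ C * ‖v‖ := by
    calc ‖p‖ * ‖p‖ = b v p := by
          rw [hv, innerSL_apply_apply, real_inner_self_eq_norm_mul_norm]
      _ ≤ |b v p| := le_abs_self _
      _ ≤ C * ‖v‖ := hbp v
  rcases (norm_nonneg p).eq_or_lt with hp | hp
  · rw [← hp, mul_zero]
    exact hC
  · refine le_of_mul_le_mul_right ?_ hp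
    calc β * ‖p‖ * ‖p‖ = β * (‖p‖ * ‖p‖) := by ring
      _ ≤ β * (C * ‖v‖) := by gcongr
      _ = C * (β * ‖v‖) := by ring
      _ ≤ C * ‖p‖ := by gcongr

lemma mul_norm_pressure_le {f : V →L[ℝ] ℝ} {u : V} {p : Q} {β : ℝ} (hβ : 0 < β)
    (hBsurj : ∀ h : Q →L[ℝ] ℝ, ∃ v : V, b v = h ∧ ‖v‖ ≤ (1 / β) * ‖h‖)
    (hsol1 : ∀ v : V, a u v + b v p = f v) (w₀ : V) :
    β * ‖p‖ ≤ dualSemiNorm univ ⇑(f - a w₀) + ‖a‖ * ‖u - w₀‖ := by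
  refine mul_norm_le_of_forall_abs_le hβ hBsurj
    (add_nonneg (dualSemiNorm_nonneg _ _) (by positivity)) fun v => ?_
  have hsplit : b v p = (f - a w₀) v - a (u - w₀) v := by
    simp only [map_sub, sub_apply]
    linarith [hsol1 v]
  calc |b v p| ≤ |(f - a w₀) v| + |a (u - w₀) v| := hsplit ▸ abs_sub _ _
    _ ≤ dualSemiNorm univ ⇑(f - a w₀) * ‖v‖ + ‖a‖ * ‖u - w₀‖ * ‖v‖ :=
        add_le_add (abs_apply_le_dualSemiNorm _ _ (mem_univ v)) (a.le_opNorm₂ _ _)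
    _ = _ := by ring

lemma mul_norm_velocity_le (hK : K = {v : V | ∀ q : Q, b v q = 0}) {α₀ : ℝ} (hα₀ : 0 < α₀)
    (hinfsup : ∀ w ∈ K, α₀ * ‖w‖ ≤ dualSemiNorm K (fun v => a w v))
    {f : V →L[ℝ] ℝ} {g : Q →L[ℝ] ℝ} {u : V} {p : Q}
    (hsol1 : ∀ v : V, a u v + b v p = f v) (hsol2 : ∀ q : Q, b u q = g q)
    {ug : V} (hug : b ug = g) {w₀ : V} (hw₀ : w₀ ∈ K) :
    α₀ * ‖u - w₀‖ ≤ dualSemiNorm K ⇑(f - a w₀) + (‖a‖ + α₀) * ‖ug‖ := by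
  have hmem : ∀ v, v ∈ K ↔ ∀ q, b v q = 0 := fun v => by rw [hK]; rfl
  have hzK : u - w₀ - ug ∈ K := (hmem _).2 fun q => by
    simp only [map_sub, sub_apply, hsol2, hug, (hmem w₀).1 hw₀ q, sub_zero, sub_self]
  have hz : α₀ * ‖u - w₀ - ug‖ ≤ dualSemiNorm K ⇑(f - a w₀) + ‖a‖ * ‖ug‖ := by
    refine (hinfsup _ hzK).trans <|
      dualSemiNorm_le (add_nonneg (dualSemiNorm_nonneg _ _) (by positivity)) fun v hv => ?_
    have hsplit : a (u - w₀ - ug) v = (f - a w₀) v - a ug v := by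
      simp only [map_sub, sub_apply]
      linarith [hsol1 v, (hmem v).1 hv p]
    calc |a (u - w₀ - ug) v| ≤ |(f - a w₀) v| + |a ug v| := hsplit ▸ abs_sub _ _
      _ ≤ dualSemiNorm K ⇑(f - a w₀) * ‖v‖ + ‖a‖ * ‖ug‖ * ‖v‖ :=
          add_le_add (abs_apply_le_dualSemiNorm _ _ hv) (a.le_opNorm₂ _ _)
      _ = _ := by ring
  have htri : ‖u - w₀‖ ≤ ‖u - w₀ - ug‖ + ‖ug‖ := norm_le_norm_sub_add _ _
  linarith [mul_le_mul_of_nonneg_left htri hα₀.le]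

end MixedProblem

theorem stmt2_general
    {V Q : Type*} [NormedAddCommGroup V] [InnerProductSpace ℝ V]
    [NormedAddCommGroup Q] [InnerProductSpace ℝ Q]
    (a : V →L[ℝ] V →L[ℝ] ℝ) (b : V →L[ℝ] Q →L[ℝ] ℝ)
    (K : Set V) (hK : K = {v : V | ∀ q : Q, b v q = 0})
    (α₀ : ℝ) (hα₀ : 0 < α₀)
    (hinfsup : ∀ w ∈ K, α₀ * ‖w‖ ≤ dualSemiNorm K (fun v => a w v))
    (β : ℝ) (hβ : 0 < β)
    (hBsurj : ∀ h : Q →L[ℝ] ℝ, ∃ v : V, b v = h ∧ ‖v‖ ≤ (1 / β) * ‖h‖)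
    (f : V →L[ℝ] ℝ) (g : Q →L[ℝ] ℝ) (u : V) (p : Q)
    (hsol1 : ∀ v : V, a u v + b v p = f v) (hsol2 : ∀ q : Q, b u q = g q) :
    ‖p‖ ≤ (1 / β) * (⨅ w : {w : V // w ∈ K},
        dualSemiNorm Set.univ (fun v => f v - a w.1 v)
          + (‖a‖ / α₀) * dualSemiNorm K (fun v => f v - a w.1 v))
      + (‖a‖ / β ^ 2) * (1 + ‖a‖ / α₀) * ‖g‖ := by
  obtain ⟨ug, hug, hug_le⟩ := hBsurj g
  have : Nonempty {w : V // w ∈ K} := ⟨0, by simp [hK]⟩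
  have hfun : ∀ w, (fun v => f v - a w v) = ⇑(f - a w) := fun w => rfl
  simp only [hfun]
  have key : β * ‖p‖ - ‖a‖ / β * (1 + ‖a‖ / α₀) * ‖g‖ ≤ ⨅ w : {w : V // w ∈ K},
      dualSemiNorm univ ⇑(f - a w.1) + ‖a‖ / α₀ * dualSemiNorm K ⇑(f - a w.1) := by
    refine le_ciInf fun ⟨w₀, hw₀⟩ => ?_
    have hu := mul_norm_velocity_le hK hα₀ hinfsup hsol1 hsol2 hug hw₀
    have hu' : ‖a‖ * ‖u - w₀‖ ≤
        ‖a‖ / α₀ * dualSemiNorm K ⇑(f - a w₀) + ‖a‖ / β * (1 + ‖a‖ / α₀) * ‖g‖ :=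
      calc ‖a‖ * ‖u - w₀‖ = ‖a‖ / α₀ * (α₀ * ‖u - w₀‖) := by field_simp
        _ ≤ ‖a‖ / α₀ * (dualSemiNorm K ⇑(f - a w₀) + (‖a‖ + α₀) * ((1 / β) * ‖g‖)) := by
          gcongr
          exact hu.trans (by gcongr)
        _ = _ := by field_simp; ring
    linarith [mul_norm_pressure_le hβ hBsurj hsol1 w₀]
  rw [sub_le_iff_le_add, ← le_div_iff₀' hβ] at key
  exact key.trans_eq (by ring)

/-- Refined stability estimate for the pressure component `p` of the mixed problem. -/
theorem stmt2
    {V Q : Type*} [NormedAddCommGroup V] [InnerProductSpace ℝ V] [CompleteSpace V]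
    [NormedAddCommGroup Q] [InnerProductSpace ℝ Q] [CompleteSpace Q]
    (a : V →L[ℝ] V →L[ℝ] ℝ) (b : V →L[ℝ] Q →L[ℝ] ℝ)
    (K : Set V) (hK : K = {v : V | ∀ q : Q, b v q = 0})
    (α₀ : ℝ) (hα₀ : 0 < α₀)
    (hinfsup : ∀ w ∈ K, α₀ * ‖w‖ ≤ dualSemiNorm K (fun v => a w v))
    (hnondeg : ∀ w ∈ K, (∀ v ∈ K, a w v = 0) → w = 0)
    (β : ℝ) (hβ : 0 < β)
    (hBsurj : ∀ h : Q →L[ℝ] ℝ, ∃ v : V, b v = h ∧ ‖v‖ ≤ (1 / β) * ‖h‖)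
    (f : V →L[ℝ] ℝ) (g : Q →L[ℝ] ℝ) (u : V) (p : Q)
    (hsol1 : ∀ v : V, a u v + b v p = f v) (hsol2 : ∀ q : Q, b u q = g q) :
    ‖p‖ ≤ (1 / β) * (⨅ w : {w : V // w ∈ K},
        dualSemiNorm Set.univ (fun v => f v - a w.1 v)
          + (‖a‖ / α₀) * dualSemiNorm K (fun v => f v - a w.1 v))
      + (‖a‖ / β ^ 2) * (1 + ‖a‖ / α₀) * ‖g‖ :=
  stmt2_general a b K hK α₀ hα₀ hinfsup β hβ hBsurj f g u p hsol1 hsol2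
end

section
/- Let u_f ∈ K solve a(u_f,v) = f(v) for all v ∈ K, where a is symmetric, bounded and coercive on V with constant α. Then the dual norms satisfy the equivalence ‖f‖_{(K_a^⊥)'} ≤ ‖f − a(u_f,·)‖_{V'} = ‖f ∘ Π_{K_a^⊥}‖_{V'} ≤ (‖a‖/α)^{1/2} ‖f‖_{(K_a^⊥)'}. -/
open Set

/-- Equivalence of dual (semi) norms: if `u_f ∈ K` solves `a(u_f, v) = f(v)` for all
`v ∈ K`, then `‖f‖_{(K_a^⊥)'} ≤ ‖f − a(u_f,·)‖_{V'} = ‖f ∘ Π_{K_a^⊥}‖_{V'}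
≤ (‖a‖/α)^{1/2} ‖f‖_{(K_a^⊥)'}`. -/
theorem stmt8
    {V : Type*} [NormedAddCommGroup V] [InnerProductSpace ℝ V] [CompleteSpace V]
    (a : V →L[ℝ] V →L[ℝ] ℝ)
    (hsym : ∀ v w : V, a v w = a w v)
    (α : ℝ) (hα : 0 < α) (hcoer : ∀ v : V, a v v ≥ α * ‖v‖ ^ 2)
    (K : Submodule ℝ V) (hKclosed : IsClosed (K : Set V))
    (Kaperp : Set V) (hKaperp : Kaperp = {v : V | ∀ w ∈ K, a v w = 0})
    (P : V → V)
    (hproj : ∀ v : V, P v ∈ Kaperp ∧ v - P v ∈ K)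
    (f : V →L[ℝ] ℝ)
    (uf : V) (hufK : uf ∈ K) (huf : ∀ v ∈ K, a uf v = f v) :
    dualSemiNorm Kaperp (fun v => f v)
      ≤ dualSemiNorm Set.univ (fun v => f v - a uf v)
    ∧ dualSemiNorm Set.univ (fun v => f v - a uf v)
      = dualSemiNorm Set.univ (fun v => f (P v))
    ∧ dualSemiNorm Set.univ (fun v => f (P v))
      ≤ Real.sqrt (‖a‖ / α) * dualSemiNorm Kaperp (fun v => f v) := by
  have hperp : ∀ v ∈ Kaperp, ∀ w ∈ K, a v w = 0 := by
    intro v hv; rw [hKaperp] at hv; exact hv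
  -- pointwise equality: f v - a uf v = f (P v)
  have hpt : ∀ v : V, f v - a uf v = f (P v) := by
    intro v
    have h1 := (hproj v).1
    have h2 := (hproj v).2
    have e1 : a uf (v - P v) = f (v - P v) := huf _ h2
    have e2 : a uf (P v) = 0 := by rw [hsym]; exact hperp _ h1 uf hufK
    rw [map_sub, map_sub, e2] at e1
    linarith
  -- key norm bound : ‖P v‖ ≤ sqrt(‖a‖/α) * ‖v‖
  have hPle : ∀ v : V, ‖P v‖ ≤ Real.sqrt (‖a‖ / α) * ‖v‖ := by
    intro v
    have h1 := (hproj v).1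
    have h2 := (hproj v).2
    have hq : a (P v) (P v) = a (P v) v := by
      have := hperp _ h1 (v - P v) h2
      rw [map_sub] at this; linarith
    set p := a (P v) (P v) with hp
    set r := a v v with hr
    have hcs : p ^ 2 ≤ r * p := by
      have hdisc : discrim r (2 * p) p ≤ 0 := by
        apply discrim_le_zero
        intro x
        have expand : r * x ^ 2 + 2 * p * x + p = a (P v + x • v) (P v + x • v) := by
          simp only [map_add, map_smul, ContinuousLinearMap.add_apply,
            ContinuousLinearMap.smul_apply, smul_eq_mul]
          have hsy : a v (P v) = a (P v) v := hsym v (P v)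
          rw [hsy, ← hq]
          ring
        have hc := hcoer (P v + x • v)
        nlinarith [expand, mul_nonneg hα.le (sq_nonneg ‖P v + x • v‖)]
      rw [discrim] at hdisc
      nlinarith
    have hple : α * ‖P v‖ ^ 2 ≤ p := hcoer (P v)
    have hrle : r ≤ ‖a‖ * ‖v‖ ^ 2 := by
      have h1 : ‖a v v‖ ≤ ‖a v‖ * ‖v‖ := (a v).le_opNorm v
      have h2 : ‖a v‖ ≤ ‖a‖ * ‖v‖ := a.le_opNorm v
      have h3 : a v v ≤ ‖a v v‖ := le_abs_self _
      nlinarith [norm_nonneg v]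
    have hkey : α * ‖P v‖ ^ 2 ≤ ‖a‖ * ‖v‖ ^ 2 := by
      rcases eq_or_lt_of_le (by nlinarith [sq_nonneg ‖P v‖, le_of_lt hα, norm_nonneg (P v)] :
        (0:ℝ) ≤ p) with h0 | h0
      · have hr0 : (0:ℝ) ≤ r := by nlinarith [hcoer v, sq_nonneg ‖v‖]
        nlinarith [norm_nonneg v, sq_nonneg ‖v‖]
      · have : p ≤ r := by nlinarith
        nlinarith
    have hsq : ‖P v‖ ^ 2 ≤ (‖a‖ / α) * ‖v‖ ^ 2 := by
      rw [div_mul_eq_mul_div, le_div_iff₀ hα]; nlinarith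
    calc ‖P v‖ = Real.sqrt (‖P v‖ ^ 2) := (Real.sqrt_sq (norm_nonneg _)).symm
      _ ≤ Real.sqrt ((‖a‖ / α) * ‖v‖ ^ 2) := Real.sqrt_le_sqrt hsq
      _ = Real.sqrt (‖a‖ / α) * ‖v‖ := by
          rw [Real.sqrt_mul (by positivity), Real.sqrt_sq (norm_nonneg _)]
  have hC0 : 0 ≤ Real.sqrt (‖a‖ / α) := Real.sqrt_nonneg _
  -- boundedness
  have hbdd1 : BddAbove ((fun v => |f v| / ‖v‖) '' (Kaperp \ {0})) := by
    refine ⟨‖f‖, ?_⟩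
    rintro x ⟨v, ⟨-, hv0⟩, rfl⟩
    have hv0' : (0:ℝ) < ‖v‖ := norm_pos_iff.mpr hv0
    rw [div_le_iff₀ hv0']
    simpa [Real.norm_eq_abs] using f.le_opNorm v
  have hbdd2 : BddAbove ((fun v => |f (P v)| / ‖v‖) '' (Set.univ \ {0})) := by
    refine ⟨‖f‖ * Real.sqrt (‖a‖ / α), ?_⟩
    rintro x ⟨v, ⟨-, hv0⟩, rfl⟩
    have hv0' : (0:ℝ) < ‖v‖ := norm_pos_iff.mpr hv0
    rw [div_le_iff₀ hv0']
    calc |f (P v)| ≤ ‖f‖ * ‖P v‖ := by simpa [Real.norm_eq_abs] using f.le_opNorm (P v)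
      _ ≤ ‖f‖ * (Real.sqrt (‖a‖ / α) * ‖v‖) :=
          mul_le_mul_of_nonneg_left (hPle v) (norm_nonneg f)
      _ = ‖f‖ * Real.sqrt (‖a‖ / α) * ‖v‖ := by ring
  have hnn1 : (0:ℝ) ≤ dualSemiNorm Kaperp (fun v => f v) := by
    apply Real.sSup_nonneg
    rintro x ⟨v, -, rfl⟩
    positivity
  have heq : dualSemiNorm Set.univ (fun v => f v - a uf v)
      = dualSemiNorm Set.univ (fun v => f (P v)) := by
    unfold dualSemiNorm
    congr 1
    ext x
    constructor <;> rintro ⟨v, hv, rfl⟩ <;> exact ⟨v, hv, by simp [hpt v]⟩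
  refine ⟨?_, heq, ?_⟩
  · rw [heq]
    apply Real.sSup_le
    · rintro x ⟨v, ⟨hvK, hv0⟩, rfl⟩
      have : (f v : ℝ) = f (P v) := by
        have : a uf v = 0 := by rw [hsym]; exact hperp v hvK uf hufK
        have := hpt v; linarith
      show |f v| / ‖v‖ ≤ _
      rw [this]
      exact le_csSup hbdd2 ⟨v, ⟨mem_univ v, hv0⟩, rfl⟩
    · apply Real.sSup_nonneg
      rintro x ⟨v, -, rfl⟩
      positivity
  · apply Real.sSup_le
    · rintro x ⟨v, ⟨-, hv0⟩, rfl⟩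
      have hv0' : (0:ℝ) < ‖v‖ := norm_pos_iff.mpr (by simpa using hv0)
      by_cases hP : P v = 0
      · simp only [hP]
        simp only [map_zero, abs_zero, zero_div]
        exact mul_nonneg hC0 hnn1
      · have h1 : |f (P v)| / ‖P v‖ ≤ dualSemiNorm Kaperp (fun v => f v) :=
          le_csSup hbdd1 ⟨P v, ⟨(hproj v).1, hP⟩, rfl⟩
        have hPpos : (0:ℝ) < ‖P v‖ := norm_pos_iff.mpr hP
        have h2 : ‖P v‖ / ‖v‖ ≤ Real.sqrt (‖a‖ / α) := by
          rw [div_le_iff₀ hv0']; exact hPle v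
        calc |f (P v)| / ‖v‖ = (|f (P v)| / ‖P v‖) * (‖P v‖ / ‖v‖) := by
              field_simp
          _ ≤ dualSemiNorm Kaperp (fun v => f v) * Real.sqrt (‖a‖ / α) :=
              mul_le_mul h1 h2 (by positivity) hnn1
          _ = Real.sqrt (‖a‖ / α) * dualSemiNorm Kaperp (fun v => f v) := mul_comm _ _
    · exact mul_nonneg hC0 hnn1
end

section
/- Under the well-posedness assumptions for the mixed problem (with a symmetric, bounded and coercive on K by α₀ > 0, and B surjective), the dual space V' decomposes as the direct sum V' = A(K) ⊕ K⁰, where A(K) = {a(w⁰,·) : w⁰ ∈ K} and K⁰ = {b(·,q) : q ∈ Q} is the polar space of K, and both summands are closed subspaces of V'. -/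
/-!
Coercivity on `K` bounds `w ↦ a(w, ·)` below on `K`, so `A(K)` is closed, and Lax–Milgram on
the Hilbert space `K` gives `w ∈ K` with `a(w, ·) = f` on `K`, i.e. `f = a(w, ·) + (f - a(w, ·))`
with the second summand in `K⁰`. The sum is direct since `a(w, ·) ∈ K⁰` with `w ∈ K` forces
`a(w, w) = 0`, hence `w = 0`.

Surjectivity of `B`, the open mapping theorem and a norming functional bound `Bᵗ` below, so its
range is closed. The Riesz map carries it to a closed subspace `R ⊆ V` with `Rᗮ = K`, so
`R = Kᗮ`, which the Riesz map carries back onto `K⁰`.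
-/

open InnerProductSpace RealInnerProductSpace

namespace ContinuousLinearMap

section Surjective

variable {𝕜 E F : Type*} [RCLike 𝕜] [NormedAddCommGroup E] [NormedSpace 𝕜 E] [CompleteSpace E]
  [NormedAddCommGroup F] [NormedSpace 𝕜 F]

theorem exists_antilipschitzWith_flip_of_surjective (b : E →L[𝕜] F →L[𝕜] 𝕜)
    (hb : Function.Surjective b) : ∃ C, AntilipschitzWith C b.flip := by
  obtain ⟨C, hC, hpre⟩ := exists_preimage_norm_le b hb
  refine ⟨⟨C, hC.le⟩, b.flip.antilipschitz_of_bound fun q => ?_⟩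
  obtain ⟨g, hg, hgq⟩ := exists_dual_vector'' 𝕜 q
  obtain ⟨v, rfl, hv⟩ := hpre g
  calc ‖q‖ = ‖b.flip q v‖ := by simp [flip_apply, hgq]
    _ ≤ ‖b.flip q‖ * ‖v‖ := le_opNorm _ _
    _ ≤ ‖b.flip q‖ * C := by
      gcongr
      exact hv.trans (mul_le_of_le_one_right hC.le hg)
    _ = C * ‖b.flip q‖ := mul_comm _ _

end Surjective

section Polar

variable {V Q : Type*} [NormedAddCommGroup V] [InnerProductSpace ℝ V] [CompleteSpace V]
  [NormedAddCommGroup Q] [NormedSpace ℝ Q]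

theorem range_flip_eq_annihilator_ker (b : V →L[ℝ] Q →L[ℝ] ℝ)
    (hb : IsClosed (Set.range b.flip)) :
    Set.range b.flip = {h | ∀ v ∈ b.ker, h v = 0} := by
  let S : Q →L[ℝ] V := (toDual ℝ V).symm.toContinuousLinearEquiv.toContinuousLinearMap ∘L b.flip
  have inner_S : ∀ q v, ⟪S q, v⟫ = b v q := fun q v => toDual_symm_apply
  have hS : IsClosed (S.range : Set V) := by
    change IsClosed (Set.range ((toDual ℝ V).symm ∘ b.flip))
    rw [Set.range_comp]
    exact (toDual ℝ V).symm.toHomeomorph.isClosedMap _ hb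
  have ker_eq : b.ker = S.rangeᗮ := by
    ext v
    simp [Submodule.mem_orthogonal, inner_S, ContinuousLinearMap.ext_iff]
  ext h
  constructor
  · rintro ⟨q, rfl⟩ v hv
    rw [flip_apply, show b v = 0 from hv, zero_apply]
  · intro hh
    have h_mem : (toDual ℝ V).symm h ∈ S.range := by
      rw [← hS.submodule_topologicalClosure_eq, ← Submodule.orthogonal_orthogonal_eq_closure,
        ← ker_eq, Submodule.mem_orthogonal]
      intro v hv
      rw [real_inner_comm, toDual_symm_apply]
      exact hh v hv
    obtain ⟨q, hq⟩ := h_mem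
    exact ⟨q, (toDual ℝ V).symm.injective hq⟩

end Polar

section CoerciveNormed

variable {V : Type*} [NormedAddCommGroup V] [NormedSpace ℝ V] (a : V →L[ℝ] V →L[ℝ] ℝ)
  (K : Submodule ℝ V) {α : ℝ}

theorem mul_norm_le_norm_apply_of_coercive_on (ha : ∀ v ∈ K, α * ‖v‖ ^ 2 ≤ a v v) {w : V}
    (hw : w ∈ K) : α * ‖w‖ ≤ ‖a w‖ := by
  rcases (norm_nonneg w).eq_or_lt with hw0 | hw0
  · rw [← hw0, mul_zero]
    exact norm_nonneg _
  refine le_of_mul_le_mul_right ?_ hw0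
  calc α * ‖w‖ * ‖w‖ = α * ‖w‖ ^ 2 := by ring
    _ ≤ a w w := ha w hw
    _ ≤ ‖a w w‖ := Real.le_norm_self _
    _ ≤ ‖a w‖ * ‖w‖ := le_opNorm _ _

theorem eq_zero_of_coercive_on (hα : 0 < α) (ha : ∀ v ∈ K, α * ‖v‖ ^ 2 ≤ a v v) {w : V}
    (hw : w ∈ K) (hww : a w w = 0) : w = 0 := by
  have := ha w hw
  rw [hww] at this
  exact norm_eq_zero.1 (pow_eq_zero_iff two_ne_zero |>.1
    (le_antisymm (nonpos_of_mul_nonpos_right this hα) (sq_nonneg _)))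

theorem isClosed_image_of_coercive_on [CompleteSpace K] (hα : 0 < α)
    (ha : ∀ v ∈ K, α * ‖v‖ ^ 2 ≤ a v v) : IsClosed (a '' K) := by
  have : AntilipschitzWith ⟨α⁻¹, (inv_pos.2 hα).le⟩ (a ∘L K.subtypeL) :=
    (a ∘L K.subtypeL).antilipschitz_of_bound fun w => by
      calc ‖w‖ = α⁻¹ * (α * ‖(w : V)‖) := by field_simp; rfl
        _ ≤ α⁻¹ * ‖a w‖ := by
          gcongr
          exact mul_norm_le_norm_apply_of_coercive_on a K ha w.2
  rw [Set.image_eq_range]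
  exact this.isClosed_range (a ∘L K.subtypeL).uniformContinuous

end CoerciveNormed

section CoerciveInner

variable {V : Type*} [NormedAddCommGroup V] [InnerProductSpace ℝ V] (a : V →L[ℝ] V →L[ℝ] ℝ)
  (K : Submodule ℝ V) [CompleteSpace K] {α : ℝ}

theorem exists_mem_forall_apply_eq_of_coercive_on (hα : 0 < α)
    (ha : ∀ v ∈ K, α * ‖v‖ ^ 2 ≤ a v v) (f : V →L[ℝ] ℝ) : ∃ w ∈ K, ∀ v ∈ K, a w v = f v := by
  have hB : IsCoercive (a.bilinearComp K.subtypeL K.subtypeL) :=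
    ⟨α, hα, fun u => by simpa [sq, mul_assoc] using ha u u.2⟩
  let w := hB.continuousLinearEquivOfBilin.symm ((toDual ℝ K).symm (f ∘L K.subtypeL))
  refine ⟨w, w.2, fun v hv => ?_⟩
  have := hB.continuousLinearEquivOfBilin_apply w ⟨v, hv⟩
  rw [ContinuousLinearEquiv.apply_symm_apply, toDual_symm_apply] at this
  exact this.symm

theorem existsUnique_add_of_coercive_on (hα : 0 < α) (ha : ∀ v ∈ K, α * ‖v‖ ^ 2 ≤ a v v)
    (f : V →L[ℝ] ℝ) : ∃! gh : (V →L[ℝ] ℝ) × (V →L[ℝ] ℝ),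
      gh.1 ∈ a '' K ∧ gh.2 ∈ {h : V →L[ℝ] ℝ | ∀ v ∈ K, h v = 0} ∧ f = gh.1 + gh.2 := by
  obtain ⟨w, hwK, hw⟩ := exists_mem_forall_apply_eq_of_coercive_on a K hα ha f
  refine ⟨(a w, f - a w),
    ⟨⟨w, hwK, rfl⟩, fun v hv => by simp [hw v hv], (add_sub_cancel _ _).symm⟩, ?_⟩
  rintro ⟨_, h⟩ ⟨⟨w', hw'K, rfl⟩, hh, rfl⟩
  have hdiff := K.sub_mem hw'K hwK
  obtain rfl : w' = w := sub_eq_zero.1 <| eq_zero_of_coercive_on a K hα ha hdiff <| by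
    simp [hw _ hdiff, hh _ hdiff]
  simp

end CoerciveInner

end ContinuousLinearMap

theorem stmt9_general
    {V Q : Type*} [NormedAddCommGroup V] [InnerProductSpace ℝ V] [CompleteSpace V]
    [NormedAddCommGroup Q] [InnerProductSpace ℝ Q] [CompleteSpace Q]
    (a : V →L[ℝ] V →L[ℝ] ℝ) (b : V →L[ℝ] Q →L[ℝ] ℝ)
    (K : Set V) (hK : K = {v : V | ∀ q : Q, b v q = 0})
    (α₀ : ℝ) (hα₀ : 0 < α₀) (hcoerK : ∀ v ∈ K, a v v ≥ α₀ * ‖v‖ ^ 2)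
    (hBsurj : ∀ g : Q →L[ℝ] ℝ, ∃ v : V, b v = g)
    (AK K0 : Set (V →L[ℝ] ℝ))
    (hAK : AK = {h : V →L[ℝ] ℝ | ∃ w ∈ K, h = a w})
    (hK0 : K0 = {h : V →L[ℝ] ℝ | ∃ q : Q, h = b.flip q}) :
    IsClosed AK ∧ IsClosed K0 ∧
    K0 = {h : V →L[ℝ] ℝ | ∀ v ∈ K, h v = 0} ∧
    ∀ f : V →L[ℝ] ℝ, ∃! gh : (V →L[ℝ] ℝ) × (V →L[ℝ] ℝ),
      gh.1 ∈ AK ∧ gh.2 ∈ K0 ∧ f = gh.1 + gh.2 := by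
  have hK_ker : K = b.ker := by
    ext v
    simp [hK, ContinuousLinearMap.ext_iff]
  have hAK_image : AK = a '' K := by
    ext
    simp [hAK, eq_comm]
  have hK0_range : K0 = Set.range b.flip := by
    ext
    simp [hK0, eq_comm]
  subst hK_ker hAK_image hK0_range
  obtain ⟨C, hC⟩ := b.exists_antilipschitzWith_flip_of_surjective hBsurj
  have hK0_closed := hC.isClosed_range b.flip.uniformContinuous
  have hK0_polar := b.range_flip_eq_annihilator_ker hK0_closed
  refine ⟨a.isClosed_image_of_coercive_on _ hα₀ hcoerK, hK0_closed, hK0_polar, fun f => ?_⟩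
  rw [hK0_polar]
  exact a.existsUnique_add_of_coercive_on _ hα₀ hcoerK f

/-- Decomposition of the dual space: `V' = A(K) ⊕ K⁰`, where
`A(K) = {a(w⁰,·) : w⁰ ∈ K}` and `K⁰ = {b(·,q) : q ∈ Q}` (the polar space of `K`),
and both summands are closed subspaces of `V'`. -/
theorem stmt9
    {V Q : Type*} [NormedAddCommGroup V] [InnerProductSpace ℝ V] [CompleteSpace V]
    [NormedAddCommGroup Q] [InnerProductSpace ℝ Q] [CompleteSpace Q]
    (a : V →L[ℝ] V →L[ℝ] ℝ) (b : V →L[ℝ] Q →L[ℝ] ℝ)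
    (hsym : ∀ v w : V, a v w = a w v)
    (K : Set V) (hK : K = {v : V | ∀ q : Q, b v q = 0})
    (α₀ : ℝ) (hα₀ : 0 < α₀) (hcoerK : ∀ v ∈ K, a v v ≥ α₀ * ‖v‖ ^ 2)
    (hBsurj : ∀ g : Q →L[ℝ] ℝ, ∃ v : V, b v = g)
    (AK K0 : Set (V →L[ℝ] ℝ))
    (hAK : AK = {h : V →L[ℝ] ℝ | ∃ w ∈ K, h = a w})
    (hK0 : K0 = {h : V →L[ℝ] ℝ | ∃ q : Q, h = b.flip q}) :
    IsClosed AK ∧ IsClosed K0 ∧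
    K0 = {h : V →L[ℝ] ℝ | ∀ v ∈ K, h v = 0} ∧
    ∀ f : V →L[ℝ] ℝ, ∃! gh : (V →L[ℝ] ℝ) × (V →L[ℝ] ℝ),
      gh.1 ∈ AK ∧ gh.2 ∈ K0 ∧ f = gh.1 + gh.2 :=
  stmt9_general a b K hK α₀ hα₀ hcoerK hBsurj AK K0 hAK hK0
end
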